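/- arXiv:2511.11966 — 5 statements merged into one kernel-verified Lean document; each statement's English description precedes it below -/
import Mathlib

section
/- Let α > 1 and define the power-law probability distribution on the positive integers by p_i = i^{-α}/ζ(α) for i ≥ 1, where ζ is the Riemann zeta function. Then the expected per-sample singleton mass satisfies lim_{m→∞} m^{1-1/α} · Σ_{i=1}^∞ p_i (1 - p_i)^{m-1} = (1/α) · ζ(α)^{-1/α} · Γ(1 - 1/α), where Γ is the Gamma function. Equivalently, the expected fraction of a size-m i.i.d. sample consisting of items seen exactly once is asymptotic to C_α · m^{1/α - 1} with C_α = (1/α) ζ(α)^{-1/α} Γ(1 - 1/α). -/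
open Filter Real Topology MeasureTheory Set

lemma aux_pow_tendsto {c : ℝ} {q : ℕ → ℝ}
    (hq0 : ∀ᶠ m in atTop, 0 < q m) (hq1 : ∀ᶠ m in atTop, q m < 1)
    (hc : Tendsto (fun m : ℕ => (m : ℝ) * q m) atTop (𝓝 c)) :
    Tendsto (fun m : ℕ => (1 - q m) ^ (m - 1)) atTop (𝓝 (Real.exp (-c))) := by
  have hnat : Tendsto (fun m : ℕ => (m : ℝ)) atTop atTop := tendsto_natCast_atTop_atTop
  have hq_zero : Tendsto q atTop (𝓝 0) := by
    have h1 : Tendsto (fun m : ℕ => ((m : ℝ) * q m) * (m : ℝ)⁻¹) atTop (𝓝 (c * 0)) :=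
      hc.mul hnat.inv_tendsto_atTop
    rw [mul_zero] at h1
    refine h1.congr' ?_
    filter_upwards [eventually_ge_atTop 1] with m hm
    have : (m : ℝ) ≠ 0 := Nat.cast_ne_zero.2 (by omega)
    field_simp
  have hslope : Tendsto (fun m : ℕ => Real.log (1 - q m) / (-q m)) atTop (𝓝 1) := by
    have hd : Tendsto (slope Real.log 1) (𝓝[≠] (1:ℝ)) (𝓝 1) := by
      have := (Real.hasDerivAt_log one_ne_zero)
      rw [hasDerivAt_iff_tendsto_slope] at this
      simpa using this
    have hy : Tendsto (fun m : ℕ => 1 - q m) atTop (𝓝[≠] (1:ℝ)) := by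
      rw [tendsto_nhdsWithin_iff]
      constructor
      · simpa using (tendsto_const_nhds.sub hq_zero)
      · filter_upwards [hq0] with m hm
        simp only [Set.mem_compl_iff, Set.mem_singleton_iff]
        intro h
        nlinarith
    have := hd.comp hy
    refine this.congr ?_
    intro m
    simp [slope, Function.comp, Real.log_one]
    ring_nf
  have harg : Tendsto (fun m : ℕ => ((m - 1 : ℕ) : ℝ) * Real.log (1 - q m)) atTop (𝓝 (-c)) := by
    have h1 : Tendsto (fun m : ℕ => (-((m : ℝ) * q m) + q m) * (Real.log (1 - q m) / (-q m)))
        atTop (𝓝 ((-c + 0) * 1)) := ((hc.neg).add hq_zero).mul hslope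
    rw [add_zero, mul_one] at h1
    refine h1.congr' ?_
    filter_upwards [hq0, eventually_ge_atTop 1] with m hm0 hm1
    have hq : q m ≠ 0 := ne_of_gt hm0
    have : ((m - 1 : ℕ) : ℝ) = (m : ℝ) - 1 := by
      rw [Nat.cast_sub hm1, Nat.cast_one]
    rw [this]
    have h2 : (-((m : ℝ) * q m) + q m) = ((m : ℝ) - 1) * (-q m) := by ring
    rw [h2, mul_assoc, ← mul_div_assoc, mul_div_cancel_left₀ _ (neg_ne_zero.mpr hq)]
  have hcont := (Real.continuous_exp.tendsto (-c)).comp harg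
  refine hcont.congr' ?_
  filter_upwards [hq0, hq1] with m hm0 hm1
  have hpos : 0 < 1 - q m := by linarith
  simp only [Function.comp]
  rw [Real.exp_nat_mul, Real.exp_log hpos]



/-- **Asymptotic singleton mass for power-law data.**
Let `α > 1` and let `p i = i^(-α) / ζ(α)` be the power-law probability distribution on the
positive integers, where `ζ(α) = ∑' i, i^(-α)` is the Riemann zeta function (for real `α > 1`).
Then the expected per-sample singleton mass satisfies
`lim_{m→∞} m^(1-1/α) * ∑' i, p i * (1 - p i)^(m-1) = (1/α) * ζ(α)^(-1/α) * Γ(1 - 1/α)`. -/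
theorem singleton_mass_asymptotics
    (α : ℝ) (hα : 1 < α)
    (Z : ℝ) (hZ : Z = ∑' i : ℕ+, (i : ℝ) ^ (-α))
    (p : ℕ+ → ℝ) (hp : ∀ i : ℕ+, p i = (i : ℝ) ^ (-α) / Z) :
    Filter.Tendsto
      (fun m : ℕ => (m : ℝ) ^ (1 - 1 / α) * ∑' i : ℕ+, p i * (1 - p i) ^ (m - 1))
      Filter.atTop
      (nhds ((1 / α) * Z ^ (-(1 / α)) * Real.Gamma (1 - 1 / α))) := by
  have hα0 : 0 < α := lt_trans one_pos hα
  set t : ℝ := 1 / α with ht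
  have htpos : 0 < t := by positivity
  have ht1 : t < 1 := by rw [ht, div_lt_one hα0]; exact hα
  have htα : t * α = 1 := by rw [ht]; field_simp
  have hαlt : -α < -1 := by linarith
  have hsum : Summable (fun n : ℕ => (n : ℝ) ^ (-α)) := Real.summable_nat_rpow.2 hαlt
  have hαne : -α ≠ 0 := by linarith
  have hZnat : Z = ∑' n : ℕ, (n : ℝ) ^ (-α) := by
    rw [hZ]
    have hsupp : Function.support (fun n : ℕ => (n:ℝ)^(-α)) ⊆ Set.range PNat.val := by
      intro n hn
      have hn0 : n ≠ 0 := by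
        intro h; apply hn; simp [h, Real.zero_rpow hαne]
      exact ⟨⟨n, Nat.pos_of_ne_zero hn0⟩, rfl⟩
    have h := Function.Injective.tsum_eq (f := fun n : ℕ => (n:ℝ)^(-α))
      PNat.coe_injective hsupp
    rw [← h]
  have hZ1 : 1 < Z := by
    have h2 : ((1:ℕ):ℝ) ^ (-α) + ((2:ℕ):ℝ) ^ (-α) ≤ Z := by
      rw [hZnat]
      have := Summable.sum_le_tsum ({1, 2} : Finset ℕ)
        (fun n _ => Real.rpow_nonneg n.cast_nonneg _) hsum
      simpa [Finset.sum_pair (by norm_num : (1:ℕ) ≠ 2)] using this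
    have h3 : (0:ℝ) < ((2:ℕ):ℝ) ^ (-α) := Real.rpow_pos_of_pos (by norm_num) _
    rw [show ((1:ℕ):ℝ) = (1:ℝ) by norm_num, Real.one_rpow] at h2
    linarith
  have hZ0 : 0 < Z := lt_trans one_pos hZ1
  set q : ℕ → ℝ := fun n => (n : ℝ) ^ (-α) / Z with hqdef
  have hq_nonneg : ∀ n, 0 ≤ q n := fun n =>
    div_nonneg (Real.rpow_nonneg n.cast_nonneg _) hZ0.le
  have hq0 : q 0 = 0 := by
    simp only [hqdef, Nat.cast_zero, Real.zero_rpow hαne, zero_div]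
  have hq_le : ∀ n, 1 ≤ n → q n ≤ 1 / Z := by
    intro n hn
    have h1 : (n:ℝ) ^ (-α) ≤ 1 := by
      refine Real.rpow_le_one_of_one_le_of_nonpos ?_ (by linarith)
      exact_mod_cast hn
    calc q n = (n:ℝ) ^ (-α) / Z := rfl
    _ ≤ 1 / Z := by gcongr
  have hq_lt1 : ∀ n, q n < 1 := by
    intro n
    rcases Nat.eq_zero_or_pos n with h | h
    · rw [h, hq0]; norm_num
    · have := hq_le n h
      have h2 : 1 / Z < 1 := by
        rw [div_lt_one hZ0]; exact hZ1
      linarith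
  have hq_sum : Summable q := hsum.div_const Z
  set B : ℕ → ℕ → ℝ := fun m n => q n * (1 - q n) ^ (m - 1) with hBdef
  have hB_nonneg : ∀ m n, 0 ≤ B m n := fun m n =>
    mul_nonneg (hq_nonneg n) (pow_nonneg (by linarith [hq_lt1 n]) _)
  have hB_le : ∀ m n, B m n ≤ q n := fun m n => by
    have h1 : (1 - q n) ^ (m - 1) ≤ 1 :=
      pow_le_one₀ (by linarith [hq_lt1 n]) (by linarith [hq_nonneg n])
    calc B m n ≤ q n * 1 := mul_le_mul_of_nonneg_left h1 (hq_nonneg n)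
    _ = q n := mul_one _
  have hB_sum : ∀ m, Summable (B m) := fun m =>
    Summable.of_nonneg_of_le (hB_nonneg m) (hB_le m) hq_sum
  have hpq : ∀ i : ℕ+, p i = q (i : ℕ) := by
    intro i
    rw [hp, hqdef]
  have hS : ∀ m : ℕ, (∑' i : ℕ+, p i * (1 - p i) ^ (m - 1)) = ∑' n : ℕ, B m n := by
    intro m
    have h1 : (∑' i : ℕ+, p i * (1 - p i) ^ (m - 1)) = ∑' i : ℕ+, B m (i : ℕ) := by
      congr 1
      funext i
      rw [hBdef]
      simp only [hpq i]
    rw [h1]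
    refine Function.Injective.tsum_eq (g := (PNat.val)) PNat.coe_injective ?_
    intro n hn
    have hn0 : n ≠ 0 := by
      intro h
      apply hn
      simp [hBdef, h, hq0]
    exact ⟨⟨n, Nat.pos_of_ne_zero hn0⟩, rfl⟩
  set G : ℕ → ℝ → ℝ := fun m y => (m : ℝ) * B m (⌈((m : ℕ) : ℝ) ^ t * y⌉₊) with hGdef
  set F : ℝ → ℝ := fun y => y ^ (-α) / Z * Real.exp (-(y ^ (-α) / Z)) with hFdef
  set Hb : ℝ → ℝ := fun y => Real.exp 1 * min 1 (y ^ (-α) / Z) with hHdef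
  have hmq : ∀ m : ℕ, 1 ≤ m → ∀ n : ℕ, 1 ≤ n →
      (m : ℝ) * q n = ((n : ℝ) / ((m : ℕ) : ℝ) ^ t) ^ (-α) / Z := by
    intro m hm n hn
    have hm0 : (0:ℝ) < m := by exact_mod_cast hm
    have hn0 : (0:ℝ) < n := by exact_mod_cast hn
    have hMt : (0:ℝ) < ((m : ℕ) : ℝ) ^ t := Real.rpow_pos_of_pos hm0 t
    have h1 : (((m : ℕ) : ℝ) ^ t) ^ (-α) = ((m : ℕ) : ℝ)⁻¹ := by
      rw [← Real.rpow_mul hm0.le, mul_neg, htα, Real.rpow_neg_one]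
    simp only [hqdef]
    rw [Real.div_rpow hn0.le hMt.le, h1]
    field_simp
  have hcontHb : ContinuousOn Hb (Ioi (0:ℝ)) := by
    refine continuousOn_const.mul ?_
    exact (continuous_const.min continuous_id).comp_continuousOn
      ((continuousOn_id.rpow_const fun x hx => Or.inl (ne_of_gt hx)).div_const _)
  have hHb_nonneg : ∀ y ∈ Ioi (0:ℝ), 0 ≤ Hb y := by
    intro y hy
    have hy0 : (0:ℝ) < y := hy
    have : 0 ≤ min 1 (y ^ (-α) / Z) :=
      le_min zero_le_one (div_nonneg (Real.rpow_nonneg hy0.le _) hZ0.le) |>.trans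
        (min_le_min le_rfl le_rfl) |>.trans le_rfl
    exact mul_nonneg (Real.exp_pos 1).le this
  have hHb_int : IntegrableOn Hb (Ioi 0) volume := by
    have hsplit : Ioi (0:ℝ) = Ioc 0 1 ∪ Ioi 1 := (Ioc_union_Ioi_eq_Ioi zero_le_one).symm
    rw [hsplit]
    refine IntegrableOn.union ?_ ?_
    · refine Integrable.mono' (g := fun _ => Real.exp 1)
        (integrableOn_const ?_) ?_ ?_
      · rw [Real.volume_Ioc]; exact ENNReal.ofReal_ne_top
      · exact (hcontHb.mono Ioc_subset_Ioi_self).aestronglyMeasurable measurableSet_Ioc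
      · refine (ae_restrict_iff' measurableSet_Ioc).2 (Eventually.of_forall ?_)
        intro y hy
        have hy0 : (0:ℝ) < y := hy.1
        rw [Real.norm_eq_abs, abs_of_nonneg (hHb_nonneg y hy0)]
        calc Hb y ≤ Real.exp 1 * 1 := by
              refine mul_le_mul_of_nonneg_left (min_le_left _ _) (Real.exp_pos 1).le
        _ = Real.exp 1 := mul_one _
    · refine Integrable.mono' (g := fun y => Real.exp 1 / Z * y ^ (-α))
        ((integrableOn_Ioi_rpow_of_lt hαlt one_pos).const_mul _) ?_ ?_
      · exact (hcontHb.mono fun x (hx : x ∈ Ioi (1:ℝ)) => (lt_trans one_pos hx : (0:ℝ) < x)).aestronglyMeasurable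
          measurableSet_Ioi
      · refine (ae_restrict_iff' measurableSet_Ioi).2 (Eventually.of_forall ?_)
        intro y hy
        have hy0 : (0:ℝ) < y := lt_trans one_pos hy
        rw [Real.norm_eq_abs, abs_of_nonneg (hHb_nonneg y hy0)]
        calc Hb y ≤ Real.exp 1 * (y ^ (-α) / Z) :=
              mul_le_mul_of_nonneg_left (min_le_right _ _) (Real.exp_pos 1).le
        _ = Real.exp 1 / Z * y ^ (-α) := by ring
  have hG_meas : ∀ m : ℕ, AEStronglyMeasurable (G m) (volume.restrict (Ioi 0)) := by
    intro m
    have : Measurable (G m) :=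
      (measurable_from_nat (f := fun n => (m : ℝ) * B m n)).comp
        (Nat.measurable_ceil.comp (measurable_id.const_mul _))
    exact this.aestronglyMeasurable
  have hG_bound : ∀ m : ℕ, 1 ≤ m → ∀ y ∈ Ioi (0:ℝ), ‖G m y‖ ≤ Hb y := by
    intro m hm y hy
    have hy0 : (0:ℝ) < y := hy
    have hm0 : (0:ℝ) < m := by exact_mod_cast hm
    have hMt : (0:ℝ) < ((m : ℕ) : ℝ) ^ t := Real.rpow_pos_of_pos hm0 t
    set n := ⌈((m : ℕ) : ℝ) ^ t * y⌉₊ with hn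
    have hn1 : 1 ≤ n := Nat.one_le_ceil_iff.2 (by positivity)
    have hn0 : (0:ℝ) < n := by exact_mod_cast hn1
    have hu : y ≤ (n : ℝ) / ((m : ℕ) : ℝ) ^ t := by
      rw [le_div_iff₀ hMt]
      calc y * ((m : ℕ) : ℝ) ^ t = ((m : ℕ) : ℝ) ^ t * y := mul_comm _ _
      _ ≤ (n : ℝ) := Nat.le_ceil _
    set s := (m : ℝ) * q n with hs
    have hs_eq : s = ((n : ℝ) / ((m : ℕ) : ℝ) ^ t) ^ (-α) / Z := hmq m hm n hn1
    have hs_pos : 0 < s := by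
      rw [hs_eq]
      exact div_pos (Real.rpow_pos_of_pos (div_pos hn0 hMt) _) hZ0
    have hs_le : s ≤ y ^ (-α) / Z := by
      rw [hs_eq]
      have hnum := Real.rpow_le_rpow_of_nonpos hy0 hu (by linarith : -α ≤ 0)
      gcongr
    have h1q : 0 ≤ 1 - q n := by linarith [hq_lt1 n]
    have hle : 1 - q n ≤ Real.exp (-q n) := by
      have := Real.add_one_le_exp (-q n); linarith
    have hcast : ((m - 1 : ℕ) : ℝ) = (m : ℝ) - 1 := by rw [Nat.cast_sub hm, Nat.cast_one]
    have hfinal_pow : (1 - q n) ^ (m - 1) ≤ Real.exp (-s) * Real.exp 1 := by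
      calc (1 - q n) ^ (m - 1) ≤ Real.exp (-q n) ^ (m - 1) := pow_le_pow_left₀ h1q hle _
      _ = Real.exp (((m - 1 : ℕ) : ℝ) * (-q n)) := (Real.exp_nat_mul _ _).symm
      _ = Real.exp (-s + q n) := by rw [hcast]; congr 1; rw [hs]; ring
      _ = Real.exp (-s) * Real.exp (q n) := Real.exp_add _ _
      _ ≤ Real.exp (-s) * Real.exp 1 := by
            exact mul_le_mul_of_nonneg_left (Real.exp_le_exp.2 (hq_lt1 n).le)
              (Real.exp_pos _).le
    have hGval : G m y = s * (1 - q n) ^ (m - 1) := by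
      simp only [hGdef, hBdef, hs, ← hn]; ring
    have hG_nonneg : 0 ≤ G m y := by
      rw [hGval]; exact mul_nonneg hs_pos.le (pow_nonneg h1q _)
    rw [Real.norm_eq_abs, abs_of_nonneg hG_nonneg, hGval]
    have hse : s * Real.exp (-s) ≤ min 1 (y ^ (-α) / Z) := by
      refine le_min ?_ ?_
      · have hes : (0:ℝ) < Real.exp s := Real.exp_pos s
        have h2 : s ≤ Real.exp s := by have := Real.add_one_le_exp s; linarith
        rw [Real.exp_neg]
        calc s * (Real.exp s)⁻¹ ≤ Real.exp s * (Real.exp s)⁻¹ := by gcongr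
        _ = 1 := mul_inv_cancel₀ hes.ne'
      · calc s * Real.exp (-s) ≤ s * 1 := by
              refine mul_le_mul_of_nonneg_left ?_ hs_pos.le
              calc Real.exp (-s) ≤ Real.exp 0 := Real.exp_le_exp.2 (by linarith)
              _ = 1 := Real.exp_zero
        _ = s := mul_one s
        _ ≤ y ^ (-α) / Z := hs_le
    calc s * (1 - q n) ^ (m - 1) ≤ s * (Real.exp (-s) * Real.exp 1) :=
          mul_le_mul_of_nonneg_left hfinal_pow hs_pos.le
    _ = s * Real.exp (-s) * Real.exp 1 := by ring
    _ ≤ min 1 (y ^ (-α) / Z) * Real.exp 1 :=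
          mul_le_mul_of_nonneg_right hse (Real.exp_pos 1).le
    _ = Hb y := by simp only [hHdef]; ring
  have hG_int : ∀ m : ℕ, 1 ≤ m → IntegrableOn (G m) (Ioi 0) volume := by
    intro m hm
    refine Integrable.mono' hHb_int (hG_meas m) ?_
    exact (ae_restrict_iff' measurableSet_Ioi).2 (Eventually.of_forall (hG_bound m hm))
  have hG_lim : ∀ y ∈ Ioi (0:ℝ), Tendsto (fun m : ℕ => G m y) atTop (𝓝 (F y)) := by
    intro y hy
    have hy0 : (0:ℝ) < y := hy
    set c := y ^ (-α) / Z with hc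
    set N : ℕ → ℕ := fun m => ⌈((m : ℕ) : ℝ) ^ t * y⌉₊ with hN
    have hN1 : ∀ m : ℕ, 1 ≤ m → 1 ≤ N m := by
      intro m hm
      have hm0 : (0:ℝ) < m := by exact_mod_cast hm
      have hMt : (0:ℝ) < ((m : ℕ) : ℝ) ^ t := Real.rpow_pos_of_pos hm0 t
      exact Nat.one_le_ceil_iff.2 (by positivity)
    have hinv : Tendsto (fun m : ℕ => (((m : ℕ) : ℝ) ^ t)⁻¹) atTop (𝓝 0) := by
      apply Tendsto.inv_tendsto_atTop
      exact (tendsto_rpow_atTop htpos).comp tendsto_natCast_atTop_atTop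
    have hu_tend : Tendsto (fun m : ℕ => (N m : ℝ) / ((m : ℕ) : ℝ) ^ t) atTop (𝓝 y) := by
      have hupper : Tendsto (fun m : ℕ => y + (((m : ℕ) : ℝ) ^ t)⁻¹) atTop (𝓝 y) := by
        simpa using tendsto_const_nhds.add hinv
      refine tendsto_of_tendsto_of_tendsto_of_le_of_le' tendsto_const_nhds hupper ?_ ?_
      · filter_upwards [eventually_ge_atTop 1] with m hm
        have hm0 : (0:ℝ) < m := by exact_mod_cast hm
        have hMt : (0:ℝ) < ((m : ℕ) : ℝ) ^ t := Real.rpow_pos_of_pos hm0 t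
        rw [le_div_iff₀ hMt]
        calc y * ((m : ℕ) : ℝ) ^ t = ((m : ℕ) : ℝ) ^ t * y := mul_comm _ _
        _ ≤ (N m : ℝ) := Nat.le_ceil _
      · filter_upwards [eventually_ge_atTop 1] with m hm
        have hm0 : (0:ℝ) < m := by exact_mod_cast hm
        have hMt : (0:ℝ) < ((m : ℕ) : ℝ) ^ t := Real.rpow_pos_of_pos hm0 t
        rw [div_le_iff₀ hMt]
        have hceil : (N m : ℝ) < ((m : ℕ) : ℝ) ^ t * y + 1 :=
          Nat.ceil_lt_add_one (by positivity)
        have : (y + (((m : ℕ) : ℝ) ^ t)⁻¹) * ((m : ℕ) : ℝ) ^ t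
            = ((m : ℕ) : ℝ) ^ t * y + 1 := by
          field_simp
        rw [this]
        linarith
    have hcm : Tendsto (fun m : ℕ => ((N m : ℝ) / ((m : ℕ) : ℝ) ^ t) ^ (-α) / Z)
        atTop (𝓝 c) := by
      rw [hc]
      exact (((Real.continuousAt_rpow_const y (-α) (Or.inl hy0.ne')).tendsto).comp
        hu_tend).div_const _
    have hc_tend : Tendsto (fun m : ℕ => (m : ℝ) * q (N m)) atTop (𝓝 c) := by
      refine hcm.congr' ?_
      filter_upwards [eventually_ge_atTop 1] with m hm
      exact (hmq m hm (N m) (hN1 m hm)).symm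
    have hq0' : ∀ᶠ m : ℕ in atTop, 0 < q (N m) := by
      filter_upwards [eventually_ge_atTop 1] with m hm
      have hn0 : (0:ℝ) < (N m : ℕ) := by exact_mod_cast hN1 m hm
      exact div_pos (Real.rpow_pos_of_pos hn0 _) hZ0
    have hq1' : ∀ᶠ m : ℕ in atTop, q (N m) < 1 := Eventually.of_forall fun m => hq_lt1 _
    have hpow := aux_pow_tendsto hq0' hq1' hc_tend
    have hmul : Tendsto (fun m : ℕ => ((m : ℝ) * q (N m)) * (1 - q (N m)) ^ (m - 1))
        atTop (𝓝 (c * Real.exp (-c))) := hc_tend.mul hpow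
    have hFy : F y = c * Real.exp (-c) := by simp only [hFdef, hc]
    rw [hFy]
    exact hmul.congr fun m => by simp only [hGdef, hBdef, hN]; ring
  have hEq : ∀ m : ℕ, 1 ≤ m →
      (∫ y in Ioi (0:ℝ), G m y) = (m : ℝ) ^ (1 - t) * ∑' n : ℕ, B m n := by
    intro m hm
    have hm0 : (0:ℝ) < m := by exact_mod_cast hm
    set M : ℝ := ((m : ℕ) : ℝ) ^ t with hM
    have hM0 : 0 < M := Real.rpow_pos_of_pos hm0 t
    set a : ℕ → ℝ := fun k => k * M⁻¹ with ha
    have ha_mono : ∀ k, a k ≤ a (k + 1) := by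
      intro k
      simp only [ha]
      have : (k : ℝ) ≤ (k : ℝ) + 1 := by linarith
      push_cast
      nlinarith [inv_pos.2 hM0]
    have ha0 : a 0 = 0 := by simp [ha]
    have ha_nonneg : ∀ k, 0 ≤ a k := fun k => by
      simp only [ha]; positivity
    have hsub : ∀ k : ℕ, Ioc (a k) (a (k + 1)) ⊆ Ioi (0:ℝ) := fun k x hx =>
      lt_of_le_of_lt (ha_nonneg k) hx.1
    have hceil : ∀ k : ℕ, ∀ y ∈ Ioc (a k) (a (k + 1)), ⌈M * y⌉₊ = k + 1 := by
      intro k y hy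
      rw [Nat.ceil_eq_iff (Nat.succ_ne_zero k)]
      constructor
      · have h1 : (k : ℝ) * M⁻¹ < y := hy.1
        have : (k : ℝ) < M * y := by
          have := (mul_lt_mul_iff_right₀ hM0).2 h1
          calc (k : ℝ) = M * ((k : ℝ) * M⁻¹) := by field_simp
          _ < M * y := this
        simpa using this
      · have h2 : y ≤ ((k : ℝ) + 1) * M⁻¹ := by
          have := hy.2
          simp only [ha] at this
          push_cast at this
          linarith
        have : M * y ≤ (k : ℝ) + 1 := by
          calc M * y ≤ M * (((k : ℝ) + 1) * M⁻¹) := by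
                exact mul_le_mul_of_nonneg_left h2 hM0.le
          _ = (k : ℝ) + 1 := by field_simp
        push_cast
        linarith
    have hmM : (m : ℝ) * M⁻¹ = (m : ℝ) ^ (1 - t) := by
      have h1 : (m : ℝ) ^ (1 - t) = (m : ℝ) ^ (1 : ℝ) * (m : ℝ) ^ (-t) := by
        rw [← Real.rpow_add hm0]; ring_nf
      rw [h1, Real.rpow_one, Real.rpow_neg hm0.le, hM]
    have hint : ∀ k : ℕ, IntervalIntegrable (G m) volume (a k) (a (k + 1)) := by
      intro k
      rw [intervalIntegrable_iff_integrableOn_Ioc_of_le (ha_mono k)]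
      exact (hG_int m hm).mono_set (hsub k)
    have hpiece : ∀ k : ℕ,
        (∫ y in (a k)..(a (k + 1)), G m y) = (m : ℝ) ^ (1 - t) * B m (k + 1) := by
      intro k
      rw [intervalIntegral.integral_of_le (ha_mono k)]
      rw [setIntegral_congr_fun (g := fun _ => (m : ℝ) * B m (k + 1)) measurableSet_Ioc ?_]
      · rw [setIntegral_const, measureReal_def, Real.volume_Ioc]
        have hd : a (k + 1) - a k = M⁻¹ := by
          simp only [ha]; push_cast; ring
        rw [hd, ENNReal.toReal_ofReal (inv_nonneg.2 hM0.le), smul_eq_mul, ← hmM]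
        ring
      · intro y hy
        simp only [hGdef, ← hM]
        rw [hceil k y hy]
    have hpartial : ∀ N : ℕ, (∫ y in (a 0)..(a N), G m y)
        = ∑ k ∈ Finset.range N, (m : ℝ) ^ (1 - t) * B m (k + 1) := by
      intro N
      rw [← intervalIntegral.sum_integral_adjacent_intervals (fun k _ => hint k)]
      exact Finset.sum_congr rfl fun k _ => hpiece k
    have hlim1 : Tendsto (fun N : ℕ => ∫ y in (a 0)..(a N), G m y) atTop
        (𝓝 (∫ y in Ioi (0:ℝ), G m y)) := by
      rw [ha0]
      refine intervalIntegral_tendsto_integral_Ioi 0 (hG_int m hm) ?_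
      exact tendsto_natCast_atTop_atTop.atTop_mul_const (inv_pos.2 hM0)
    have hsum' : Summable (fun k : ℕ => B m (k + 1)) :=
      (summable_nat_add_iff 1).2 (hB_sum m)
    have htsum : (∑' k : ℕ, B m (k + 1)) = ∑' n : ℕ, B m n := by
      rw [Summable.tsum_eq_zero_add (hB_sum m)]
      simp [hBdef, hq0]
    have hlim2 : Tendsto (fun N : ℕ => ∑ k ∈ Finset.range N,
        (m : ℝ) ^ (1 - t) * B m (k + 1)) atTop
        (𝓝 ((m : ℝ) ^ (1 - t) * ∑' n : ℕ, B m n)) := by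
      rw [← htsum]
      exact (hsum'.hasSum.mul_left ((m : ℝ) ^ (1 - t))).tendsto_sum_nat
    exact tendsto_nhds_unique (hlim1.congr hpartial) hlim2
  have hI : (∫ y in Ioi (0:ℝ), F y) = t * Z ^ (-t) * Real.Gamma (1 - t) := by
    have hJ2 : Real.Gamma (1 - t) = ∫ x in Ioi (0:ℝ), Real.exp (-x) * x ^ (-t) := by
      rw [Real.Gamma_eq_integral (by linarith : (0:ℝ) < 1 - t)]
      simp only [show (1:ℝ) - t - 1 = -t from by ring]
    set g : ℝ → ℝ := fun w => w ^ (-α) * Real.exp (-w ^ (-α)) with hg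
    have hJ1 : (∫ w in Ioi (0:ℝ), g w) = t * Real.Gamma (1 - t) := by
      rw [← integral_comp_rpow_Ioi g (p := -t) (by linarith : -t ≠ 0)]
      rw [show |(-t)| = t from by rw [abs_neg, abs_of_pos htpos]]
      rw [hJ2, ← integral_const_mul]
      refine setIntegral_congr_fun measurableSet_Ioi ?_
      intro x hx
      have hx0 : (0:ℝ) < x := hx
      simp only [hg, smul_eq_mul]
      have h1 : (x ^ (-t)) ^ (-α) = x := by
        rw [← Real.rpow_mul hx0.le, show -t * -α = 1 from by rw [neg_mul_neg, htα],
          Real.rpow_one]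
      rw [h1]
      have h2 : x ^ (-t - 1) * x = x ^ (-t) := by
        calc x ^ (-t - 1) * x = x ^ (-t - 1) * x ^ (1:ℝ) := by rw [Real.rpow_one]
        _ = x ^ (-t - 1 + 1) := (Real.rpow_add hx0 _ _).symm
        _ = x ^ (-t) := by ring_nf
      calc t * x ^ (-t - 1) * (x * Real.exp (-x))
          = t * Real.exp (-x) * (x ^ (-t - 1) * x) := by ring
      _ = t * Real.exp (-x) * x ^ (-t) := by rw [h2]
      _ = t * (Real.exp (-x) * x ^ (-t)) := by ring
    have hZt : (0:ℝ) < Z ^ t := Real.rpow_pos_of_pos hZ0 t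
    have hcomp := integral_comp_mul_left_Ioi g 0 hZt
    rw [mul_zero] at hcomp
    have hFg : ∀ x ∈ Ioi (0:ℝ), F x = g (Z ^ t * x) := by
      intro x hx
      have hx0 : (0:ℝ) < x := hx
      simp only [hFdef, hg]
      have h1 : (Z ^ t * x) ^ (-α) = x ^ (-α) / Z := by
        rw [Real.mul_rpow hZt.le hx0.le, ← Real.rpow_mul hZ0.le,
          show t * -α = -1 from by rw [mul_neg, htα], Real.rpow_neg_one]
        rw [div_eq_mul_inv, mul_comm]
      rw [h1]
    calc (∫ y in Ioi (0:ℝ), F y) = ∫ y in Ioi (0:ℝ), g (Z ^ t * y) :=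
          setIntegral_congr_fun measurableSet_Ioi hFg
    _ = (Z ^ t)⁻¹ • ∫ x in Ioi (0:ℝ), g x := hcomp
    _ = (Z ^ t)⁻¹ * (t * Real.Gamma (1 - t)) := by rw [hJ1, smul_eq_mul]
    _ = t * Z ^ (-t) * Real.Gamma (1 - t) := by
          rw [Real.rpow_neg hZ0.le]; ring
  have key : Tendsto (fun m : ℕ => ∫ y in Ioi (0:ℝ), G m y) atTop
      (𝓝 (∫ y in Ioi (0:ℝ), F y)) := by
    refine tendsto_integral_filter_of_dominated_convergence Hb ?_ ?_ hHb_int ?_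
    · exact Eventually.of_forall hG_meas
    · filter_upwards [eventually_ge_atTop 1] with m hm
      refine (ae_restrict_iff' measurableSet_Ioi).2 (Eventually.of_forall ?_)
      exact hG_bound m hm
    · refine (ae_restrict_iff' measurableSet_Ioi).2 (Eventually.of_forall ?_)
      exact fun y hy => hG_lim y hy
  rw [hI] at key
  have : (1 / α) = t := rfl
  refine key.congr' ?_
  filter_upwards [eventually_ge_atTop 1] with m hm
  rw [hEq m hm, hS m]
end

section
/- Let α > 1 and Z ∈ (0, 1]. Then lim_{m→∞} m^{1 - 1/α} ∫_1^∞ Z x^{-α} (1 - Z x^{-α})^{m-1} dx = (1/α) Z^{1/α} Γ(1 - 1/α), where the limit is taken over positive integers m (equivalently over real m → ∞) and Γ is the Gamma function. -/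
open MeasureTheory Filter Set

private theorem sm_integrableOn_aux (s : ℝ) (hs0 : 0 < s) (n : ℕ) :
    IntegrableOn (fun u : ℝ => u ^ (s - 1) * (1 - u) ^ n) (Ioo (0:ℝ) 1) := by
  have hbase : IntegrableOn (fun u : ℝ => u ^ (s - 1)) (Ioo (0:ℝ) 1) := by
    have := (intervalIntegral.intervalIntegrable_rpow' (a := 0) (b := 1)
      (r := s - 1) (by linarith)).1
    exact this.mono_set Set.Ioo_subset_Ioc_self
  refine Integrable.mono hbase ((Measurable.aestronglyMeasurable (by fun_prop))) ?_
  rw [ae_restrict_iff' measurableSet_Ioo]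
  filter_upwards with u hu
  have h0 : (0:ℝ) < u := hu.1
  have h1 : u < 1 := hu.2
  rw [Real.norm_eq_abs, Real.norm_eq_abs, abs_mul,
    abs_of_nonneg (Real.rpow_nonneg h0.le _), abs_of_nonneg (pow_nonneg (by linarith) n)]
  nlinarith [Real.rpow_nonneg h0.le (s-1),
    pow_le_one₀ (by linarith : (0:ℝ) ≤ 1-u) (by linarith : 1-u ≤ 1) (n := n),
    Real.rpow_pos_of_pos h0 (s-1)]

private theorem sm_beta_tendsto (s : ℝ) (hs0 : 0 < s) :
    Tendsto (fun n : ℕ => (n : ℝ) ^ s * ∫ u in Ioo (0:ℝ) 1, u ^ (s - 1) * (1 - u) ^ n)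
      atTop (nhds (Real.Gamma s)) := by
  have key : ∀ n : ℕ, Complex.GammaSeq (s : ℂ) n
      = (((n : ℝ) ^ s * ∫ u in Ioo (0:ℝ) 1, u ^ (s - 1) * (1 - u) ^ n : ℝ) : ℂ) := by
    intro n
    rw [Complex.GammaSeq_eq_betaIntegral_of_re_pos (by simpa using hs0) n]
    have hbeta : Complex.betaIntegral (s : ℂ) (n + 1)
        = ((∫ u in Ioo (0:ℝ) 1, u ^ (s - 1) * (1 - u) ^ n : ℝ) : ℂ) := by
      rw [Complex.betaIntegral]
      have : ∀ x ∈ Set.uIcc (0:ℝ) 1,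
          (x : ℂ) ^ ((s:ℂ) - 1) * (1 - (x:ℂ)) ^ ((n:ℂ) + 1 - 1)
            = ((x ^ (s - 1) * (1 - x) ^ n : ℝ) : ℂ) := by
        intro x hx
        rw [Set.uIcc_of_le (by norm_num)] at hx
        have h1 : ((s:ℂ) - 1) = ((s - 1 : ℝ) : ℂ) := by push_cast; ring
        have h2 : ((n:ℂ) + 1 - 1) = (((n:ℕ):ℝ) : ℂ) := by push_cast; ring
        have h3 : (1 - (x:ℂ)) = ((1 - x : ℝ) : ℂ) := by push_cast; ring
        rw [h1, h2, h3, ← Complex.ofReal_cpow hx.1, ← Complex.ofReal_cpow (by linarith [hx.2]),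
          ← Complex.ofReal_mul, Real.rpow_natCast]
      rw [intervalIntegral.integral_congr this]
      have h4 : ∫ x in (0:ℝ)..1, ((x ^ (s - 1) * (1 - x) ^ n : ℝ) : ℂ)
          = ((∫ x in (0:ℝ)..1, x ^ (s - 1) * (1 - x) ^ n : ℝ) : ℂ) := by
        rw [intervalIntegral.integral_ofReal]
      rw [h4, intervalIntegral.integral_of_le (by norm_num), integral_Ioc_eq_integral_Ioo]
    rw [hbeta]
    have h5 : ((n:ℂ)) ^ (s:ℂ) = (((n:ℝ) ^ s : ℝ) : ℂ) := by
      rw [Complex.ofReal_cpow (Nat.cast_nonneg n)]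
      norm_num
    rw [h5, ← Complex.ofReal_mul]
  have h := Complex.GammaSeq_tendsto_Gamma (s : ℂ)
  rw [Complex.Gamma_ofReal] at h
  have h2 := (Complex.continuous_re.tendsto _).comp h
  simpa [key, Function.comp_def] using h2

private theorem sm_subst_lemma (α Z : ℝ) (hα : 1 < α) (hZ0 : 0 < Z) (n : ℕ) :
    ∫ x in Set.Ioi (1:ℝ), Z * x ^ (-α) * (1 - Z * x ^ (-α)) ^ n
      = (Z ^ (1/α) / α) * ∫ u in Set.Ioo (0:ℝ) Z, u ^ ((1 - 1/α) - 1) * (1 - u) ^ n := by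
  have hα0 : (0:ℝ) < α := by linarith
  set f : ℝ → ℝ := fun x => Z * x ^ (-α) with hf
  set f' : ℝ → ℝ := fun x => Z * (-α * x ^ (-α - 1)) with hf'
  have hd : ∀ x ∈ Ioi (1:ℝ), HasDerivWithinAt f (f' x) (Ioi 1) x := by
    intro x hx
    have hx0 : (0:ℝ) < x := lt_trans one_pos hx
    exact ((Real.hasDerivAt_rpow_const (Or.inl hx0.ne')).const_mul Z).hasDerivWithinAt
  have hanti : StrictAntiOn f (Ioi (1:ℝ)) := by
    intro x hx y hy hxy
    have hx0 : (0:ℝ) < x := lt_trans one_pos hx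
    exact mul_lt_mul_of_pos_left
      (Real.rpow_lt_rpow_of_neg hx0 hxy (neg_neg_iff_pos.mpr hα0)) hZ0
  have himg : f '' Ioi 1 = Ioo 0 Z := by
    ext u
    constructor
    · rintro ⟨x, hx, rfl⟩
      have hx0 : (0:ℝ) < x := lt_trans one_pos hx
      refine ⟨mul_pos hZ0 (Real.rpow_pos_of_pos hx0 _), ?_⟩
      have : x ^ (-α) < 1 ^ (-α) := Real.rpow_lt_rpow_of_neg one_pos hx (by linarith)
      rw [Real.one_rpow] at this
      calc Z * x ^ (-α) < Z * 1 := by exact mul_lt_mul_of_pos_left this hZ0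
        _ = Z := mul_one Z
    · rintro ⟨hu0, huZ⟩
      refine ⟨(u / Z) ^ (-(1/α)), ?_, ?_⟩
      · rw [mem_Ioi]
        rw [Real.one_lt_rpow_iff_of_pos (div_pos hu0 hZ0)]
        exact Or.inr ⟨(div_lt_one hZ0).mpr huZ, neg_neg_iff_pos.mpr (by positivity)⟩
      · show Z * ((u / Z) ^ (-(1/α))) ^ (-α) = u
        rw [← Real.rpow_mul (by positivity)]
        have : (-(1/α)) * (-α) = 1 := by field_simp
        rw [this, Real.rpow_one, mul_div_cancel₀ _ hZ0.ne']
  rw [← himg, integral_image_eq_integral_abs_deriv_smul measurableSet_Ioi hd hanti.injOn]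
  have hpt : ∀ x ∈ Ioi (1:ℝ),
      |f' x| • ((f x) ^ ((1 - 1/α) - 1) * (1 - f x) ^ n)
        = (α * Z ^ ((1 - 1/α) - 1)) * (Z * x ^ (-α) * (1 - Z * x ^ (-α)) ^ n) := by
    intro x hx
    have hx0 : (0:ℝ) < x := lt_trans one_pos hx
    have habs : |f' x| = Z * α * x ^ (-α - 1) := by
      have h1 : f' x = -(Z * α * x ^ (-α - 1)) := by rw [hf']; ring
      rw [h1, abs_neg, abs_of_pos (by positivity)]
    have hfx : (f x) ^ ((1 - 1/α) - 1) = Z ^ ((1 - 1/α) - 1) * x := by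
      rw [hf]
      rw [Real.mul_rpow hZ0.le (Real.rpow_nonneg hx0.le _),
        ← Real.rpow_mul hx0.le]
      have : (-α) * ((1 - 1/α) - 1) = 1 := by field_simp; ring
      rw [this, Real.rpow_one]
    have hxx : x ^ (-α - 1) * x = x ^ (-α) := by
      rw [← Real.rpow_add_one hx0.ne' (-α - 1)]; ring_nf
    rw [smul_eq_mul, habs, hfx, hf]
    simp only []
    linear_combination (Z * α * Z ^ (1 - 1/α - 1) * (1 - Z * x ^ (-α)) ^ n) * hxx
  rw [setIntegral_congr_fun measurableSet_Ioi hpt, integral_const_mul]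
  rw [← mul_assoc]
  have hconst : Z ^ (1/α) / α * (α * Z ^ ((1 - 1/α) - 1)) = 1 := by
    have : Z ^ (1/α) * Z ^ ((1 - 1/α) - 1) = 1 := by
      rw [← Real.rpow_add hZ0]
      norm_num
    rw [div_mul_eq_mul_div, show Z ^ (1/α) * (α * Z ^ ((1 - 1/α) - 1))
      = α * (Z ^ (1/α) * Z ^ ((1 - 1/α) - 1)) from by ring, this, mul_one, div_self hα0.ne']
  rw [hconst, one_mul]

private theorem sm_tail_tendsto (s Z : ℝ) (hs1 : s < 1) (hZ0 : 0 < Z) (hZ1 : Z ≤ 1) :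
    Tendsto (fun n : ℕ => ((n : ℝ) + 1) ^ s * ∫ u in Ico Z 1, u ^ (s - 1) * (1 - u) ^ n)
      atTop (nhds 0) := by
  set C : ℝ := Z ^ (s - 1) with hC
  have hC0 : 0 < C := Real.rpow_pos_of_pos hZ0 _
  have hr0 : 0 ≤ 1 - Z := by linarith
  have hr1 : 1 - Z < 1 := by linarith
  have hg : Tendsto (fun n : ℕ => C * (((n:ℝ) * (1-Z) ^ n) + (1-Z) ^ n)) atTop (nhds 0) := by
    have h1 : Tendsto (fun n : ℕ => (n:ℝ) ^ 1 * (1-Z) ^ n) atTop (nhds 0) :=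
      ((summable_norm_pow_mul_geometric_of_norm_lt_one (R := ℝ) 1
        (by rw [Real.norm_eq_abs, abs_of_nonneg hr0]; exact hr1)).of_norm).tendsto_atTop_zero
    simp only [pow_one] at h1
    have h2 : Tendsto (fun n : ℕ => (1-Z) ^ n) atTop (nhds 0) :=
      tendsto_pow_atTop_nhds_zero_of_lt_one hr0 hr1
    simpa using (h1.add h2).const_mul C
  have hnn : ∀ n : ℕ, 0 ≤ ((n : ℝ) + 1) ^ s * ∫ u in Ico Z 1, u ^ (s - 1) * (1 - u) ^ n := by
    intro n
    apply mul_nonneg (Real.rpow_nonneg (by positivity) _)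
    apply setIntegral_nonneg measurableSet_Ico
    intro u hu
    have h1 : 0 < u := lt_of_lt_of_le hZ0 hu.1
    have h2 : u ≤ 1 := hu.2.le
    have h3 : 0 ≤ 1 - u := by linarith
    positivity
  have hub : ∀ n : ℕ, ((n : ℝ) + 1) ^ s * (∫ u in Ico Z 1, u ^ (s - 1) * (1 - u) ^ n)
      ≤ C * (((n:ℝ) * (1-Z) ^ n) + (1-Z) ^ n) := by
    intro n
    have hvol : (volume (Ico Z 1)).toReal ≤ 1 := by
      rw [Real.volume_Ico, ENNReal.toReal_ofReal hr0]; linarith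
    have hint : (∫ u in Ico Z 1, u ^ (s - 1) * (1 - u) ^ n) ≤ C * (1-Z)^n := by
      have hb : ‖∫ u in Ico Z 1, u ^ (s - 1) * (1 - u) ^ n‖
          ≤ (C * (1-Z)^n) * (volume (Ico Z 1)).toReal := by
        apply norm_setIntegral_le_of_norm_le_const
        · rw [Real.volume_Ico]; exact ENNReal.ofReal_lt_top
        · intro u hu
          have hu0 : 0 < u := lt_of_lt_of_le hZ0 hu.1
          rw [Real.norm_eq_abs, abs_mul, abs_of_nonneg (Real.rpow_nonneg hu0.le _),
            abs_of_nonneg (pow_nonneg (by linarith [hu.2] : (0:ℝ) ≤ 1 - u) n)]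
          apply mul_le_mul
          · exact Real.rpow_le_rpow_of_nonpos hZ0 hu.1 (by linarith)
          · exact pow_le_pow_left₀ (by linarith [hu.2]) (by linarith [hu.1]) n
          · exact pow_nonneg (by linarith [hu.2]) n
          · exact hC0.le
      calc (∫ u in Ico Z 1, u ^ (s - 1) * (1 - u) ^ n)
          ≤ ‖∫ u in Ico Z 1, u ^ (s - 1) * (1 - u) ^ n‖ := Real.le_norm_self _
        _ ≤ (C * (1-Z)^n) * (volume (Ico Z 1)).toReal := hb
        _ ≤ (C * (1-Z)^n) * 1 := by
            apply mul_le_mul_of_nonneg_left hvol (by positivity)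
        _ = C * (1-Z)^n := mul_one _
    have hpow : ((n : ℝ) + 1) ^ s ≤ (n:ℝ) + 1 := by
      calc ((n : ℝ) + 1) ^ s ≤ ((n : ℝ) + 1) ^ (1:ℝ) :=
            Real.rpow_le_rpow_of_exponent_le (by norm_num) hs1.le
        _ = (n:ℝ) + 1 := Real.rpow_one _
    have hInn : 0 ≤ ∫ u in Ico Z 1, u ^ (s - 1) * (1 - u) ^ n := by
      apply setIntegral_nonneg measurableSet_Ico
      intro u hu
      have h1 : 0 < u := lt_of_lt_of_le hZ0 hu.1
      have h3 : 0 ≤ 1 - u := by linarith [hu.2]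
      positivity
    calc ((n : ℝ) + 1) ^ s * (∫ u in Ico Z 1, u ^ (s - 1) * (1 - u) ^ n)
        ≤ ((n:ℝ) + 1) * (∫ u in Ico Z 1, u ^ (s - 1) * (1 - u) ^ n) :=
          mul_le_mul_of_nonneg_right hpow hInn
      _ ≤ ((n:ℝ) + 1) * (C * (1-Z)^n) :=
          mul_le_mul_of_nonneg_left hint (by positivity)
      _ = C * (((n:ℝ) * (1-Z) ^ n) + (1-Z) ^ n) := by ring
  exact squeeze_zero hnn hub hg

private theorem sm_betaZ_tendsto (s Z : ℝ) (hs0 : 0 < s) (hs1 : s < 1)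
    (hZ0 : 0 < Z) (hZ1 : Z ≤ 1) :
    Tendsto (fun n : ℕ => ((n : ℝ) + 1) ^ s * ∫ u in Ioo (0:ℝ) Z, u ^ (s - 1) * (1 - u) ^ n)
      atTop (nhds (Real.Gamma s)) := by
  have hfull : Tendsto
      (fun n : ℕ => ((n : ℝ) + 1) ^ s * ∫ u in Ioo (0:ℝ) 1, u ^ (s - 1) * (1 - u) ^ n)
      atTop (nhds (Real.Gamma s)) := by
    have h1 : Tendsto (fun n : ℕ => (((n:ℝ) + 1) / n) ^ s) atTop (nhds 1) := by
      have ha : Tendsto (fun n : ℕ => 1 + 1/(n:ℝ)) atTop (nhds 1) := by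
        simpa using (tendsto_const_nhds (x := (1:ℝ)) (f := atTop)).add
          tendsto_one_div_atTop_nhds_zero_nat
      have hb : Tendsto (fun n : ℕ => ((n:ℝ) + 1) / n) atTop (nhds 1) := by
        apply ha.congr'
        filter_upwards [eventually_ge_atTop 1] with n hn
        have hn0 : (0:ℝ) < n := by exact_mod_cast hn
        field_simp
      simpa using hb.rpow_const (Or.inl one_ne_zero) (p := s)
    have hmul := h1.mul (sm_beta_tendsto s hs0)
    rw [one_mul] at hmul
    apply hmul.congr'
    filter_upwards [eventually_ge_atTop 1] with n hn
    have hn0 : (0:ℝ) < n := by exact_mod_cast hn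
    have hns : (0:ℝ) < (n:ℝ) ^ s := Real.rpow_pos_of_pos hn0 s
    rw [Real.div_rpow (by positivity) hn0.le]
    field_simp
  have htail := sm_tail_tendsto s Z hs1 hZ0 hZ1
  have hsplit : ∀ n : ℕ,
      (∫ u in Ioo (0:ℝ) 1, u ^ (s - 1) * (1 - u) ^ n)
        = (∫ u in Ioo (0:ℝ) Z, u ^ (s - 1) * (1 - u) ^ n)
          + ∫ u in Ico Z 1, u ^ (s - 1) * (1 - u) ^ n := by
    intro n
    rw [← Set.Ioo_union_Ico_eq_Ioo hZ0 hZ1]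
    apply setIntegral_union
    · rw [Set.disjoint_left]; rintro x ⟨_, h1⟩ ⟨h2, _⟩; exact absurd h1 h2.not_gt
    · exact measurableSet_Ico
    · exact (sm_integrableOn_aux s hs0 n).mono_set (Set.Ioo_subset_Ioo le_rfl hZ1)
    · exact (sm_integrableOn_aux s hs0 n).mono_set
        (fun u hu => ⟨lt_of_lt_of_le hZ0 hu.1, hu.2⟩)
  have hdiff := hfull.sub htail
  rw [sub_zero] at hdiff
  apply hdiff.congr
  intro n
  rw [hsplit n]
  ring

/-- **Limit of the singleton-mass integral.**
For `α > 1` and `Z ∈ (0,1]`,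
`lim_{m→∞} m^(1-1/α) ∫_1^∞ Z x^(-α) (1 - Z x^(-α))^(m-1) dx = (1/α) Z^(1/α) Γ(1 - 1/α)`,
where the limit is taken over positive integers `m → ∞` and `Γ` is the Gamma function. -/
theorem singleton_mass_integral_limit
    (α Z : ℝ) (hα : 1 < α) (hZ0 : 0 < Z) (hZ1 : Z ≤ 1) :
    Filter.Tendsto
      (fun m : ℕ => (m : ℝ) ^ (1 - 1 / α) *
        ∫ x in Set.Ioi (1 : ℝ), Z * x ^ (-α) * (1 - Z * x ^ (-α)) ^ (m - 1))
      Filter.atTop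
      (nhds ((1 / α) * Z ^ (1 / α) * Real.Gamma (1 - 1 / α))) := by
  have hα0 : (0:ℝ) < α := by linarith
  have hs0 : 0 < 1 - 1/α := by
    have : 1/α < 1 := by rw [div_lt_one hα0]; exact hα
    linarith
  have hs1 : 1 - 1/α < 1 := by
    have : 0 < 1/α := by positivity
    linarith
  rw [← Filter.tendsto_add_atTop_iff_nat 1]
  have hbz := (sm_betaZ_tendsto (1 - 1/α) Z hs0 hs1 hZ0 hZ1).const_mul (Z ^ (1/α) / α)
  have hval : (Z ^ (1/α) / α) * Real.Gamma (1 - 1/α)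
      = (1 / α) * Z ^ (1 / α) * Real.Gamma (1 - 1/α) := by ring
  rw [hval] at hbz
  apply hbz.congr
  intro n
  have hcast : ((↑(n + 1) : ℝ)) = (n : ℝ) + 1 := by push_cast; ring
  rw [show n + 1 - 1 = n from rfl, sm_subst_lemma α Z hα hZ0 n, hcast]
  ring
end

section
/- Hybrid telescoping identity for entropy calibration error: let q, p*, and p̃ be as in the context with p̃_X(Y) > 0 for all X, Y. For t = 1, …, T define A_t = E_{X~q} E_{Y_{≤t}~p*_X} E_{Ŷ_{>t}~p̃_X(·|Y_{≤t})}[-log p̃_X(Y_{≤t}, Ŷ_{>t})] and B_t = E_{X~q} E_{Y_{<t}~p*_X} E_{Ŷ_{≥t}~p̃_X(·|Y_{<t})}[-log p̃_X(Y_{<t}, Ŷ_{≥t})]. Then L(p* ∥ p̃) − H(p̃) = Σ_{t=1}^T (A_t − B_t); in particular the entropy calibration error satisfies |H(p̃) − L(p* ∥ p̃)| ≤ Σ_{t=1}^T |A_t − B_t|. -/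
open Finset

/-- Probability under `p` that a sequence drawn from `p` agrees with `y` on its first `t`
coordinates (the prefix marginal `p(Y_{≤t} = y_{≤t})`). -/
noncomputable def prefProb {V : Type*} [Fintype V] [DecidableEq V] (T t : ℕ)
    (p : (Fin T → V) → ℝ) (y : Fin T → V) : ℝ :=
  ∑ w : Fin T → V, if ∀ s : Fin T, (s : ℕ) < t → w s = y s then p w else 0

/-- `E_{Y_{≤t} ~ pstar} E_{Ŷ_{>t} ~ pt(·|Y_{≤t})}[-log pt(Y_{≤t}, Ŷ_{>t})]`: the first `t`
coordinates are drawn from `pstar`, the remaining ones from `pt` conditioned on them, and we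
record the negative log probability under `pt` of the resulting full sequence. -/
noncomputable def hybridLoss {V : Type*} [Fintype V] [DecidableEq V] (T : ℕ)
    (pstar pt : (Fin T → V) → ℝ) (t : ℕ) : ℝ :=
  ∑ y : Fin T → V, pstar y *
    ((∑ w : Fin T → V,
        if ∀ s : Fin T, (s : ℕ) < t → w s = y s then pt w * (-Real.log (pt w)) else 0) /
      prefProb T t pt y)

/-- **Hybrid telescoping identity for the entropy calibration error.**
With prompts `X ~ q` (a pmf on a countable prompt set), true conditionals `pstar X` and a
strictly positive model `pt X` on `V^T`, define for `t = 1, …, T`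
`A t = E_{X~q} E_{Y_{≤t}~pstar_X} E_{Ŷ_{>t}~pt_X(·|Y_{≤t})}[-log pt_X(Y_{≤t}, Ŷ_{>t})]` and
`B t = E_{X~q} E_{Y_{<t}~pstar_X} E_{Ŷ_{≥t}~pt_X(·|Y_{<t})}[-log pt_X(Y_{<t}, Ŷ_{≥t})]`.
Then the log loss `L`, the entropy `H` satisfy `L - H = ∑_{t=1}^T (A t - B t)`, and in
particular `|H - L| ≤ ∑_{t=1}^T |A t - B t|`. -/
theorem hybrid_telescoping
    {𝒳 : Type*} [Countable 𝒳] {V : Type*} [Fintype V] [DecidableEq V] [Nonempty V]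
    (T : ℕ) (q : 𝒳 → ℝ) (pstar pt : 𝒳 → (Fin T → V) → ℝ)
    (hq0 : ∀ X, 0 ≤ q X) (hq1 : ∑' X : 𝒳, q X = 1)
    (hstar0 : ∀ X y, 0 ≤ pstar X y) (hstar1 : ∀ X, ∑ y : Fin T → V, pstar X y = 1)
    (hpt0 : ∀ X y, 0 < pt X y) (hpt1 : ∀ X, ∑ y : Fin T → V, pt X y = 1)
    (A B : ℕ → ℝ)
    (hA : ∀ t : ℕ, A t = ∑' X : 𝒳, q X * hybridLoss T (pstar X) (pt X) t)
    (hB : ∀ t : ℕ, B t = ∑' X : 𝒳, q X * hybridLoss T (pstar X) (pt X) (t - 1))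
    (H L : ℝ)
    (hH : H = ∑' X : 𝒳, q X * hybridLoss T (pstar X) (pt X) 0)
    (hL : L = ∑' X : 𝒳, q X * hybridLoss T (pstar X) (pt X) T) :
    L - H = ∑ t ∈ Finset.Icc 1 T, (A t - B t) ∧
    |H - L| ≤ ∑ t ∈ Finset.Icc 1 T, |A t - B t| := by
  set F : ℕ → ℝ := fun t => ∑' X : 𝒳, q X * hybridLoss T (pstar X) (pt X) t with hF
  have hmain : L - H = ∑ t ∈ Finset.Icc 1 T, (A t - B t) := by
    have h1 : ∀ t ∈ Finset.Icc 1 T, A t - B t = F t - F (t - 1) := by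
      intro t _
      rw [hA, hB]
    rw [Finset.sum_congr rfl h1]
    have h2 : ∀ n : ℕ, ∑ t ∈ Finset.Icc 1 n, (F t - F (t - 1)) = F n - F 0 := by
      intro n
      induction n with
      | zero => simp
      | succ k ih =>
        rw [Finset.sum_Icc_succ_top (by omega : 1 ≤ k + 1), ih]
        simp
    rw [h2, hL, hH]
  refine ⟨hmain, ?_⟩
  calc |H - L| = |∑ t ∈ Finset.Icc 1 T, (A t - B t)| := by rw [← hmain, abs_sub_comm]
    _ ≤ ∑ t ∈ Finset.Icc 1 T, |A t - B t| := Finset.abs_sum_le_sum_abs _ _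
end

section
/- Derivative of globally temperature-adjusted conditional log probabilities: let p be a strictly positive probability mass function on V^T and for α ∈ ℝ define the globally adjusted distribution p_α(Y) = p(Y)^{1+α} / Σ_{Y'∈V^T} p(Y')^{1+α}. Then for every t ∈ {1,…,T} and every Y ∈ V^T, the map α ↦ log p_α(Y_t | Y_{<t}) is differentiable with d/dα log p_α(Y_t | Y_{<t}) = log p(Y_t | Y_{<t}) + E_{Ŷ_{>t} ~ p_α(· | Y_{≤t})}[ log p(Ŷ_{>t} | Y_{≤t}) ] − E_{Ŷ_{≥t} ~ p_α(· | Y_{<t})}[ log p(Ŷ_{≥t} | Y_{<t}) ]. -/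
open Finset

/-- Conditional probability `p(y_t | y_{<t})` of the token at (0-indexed) position `t`. -/
noncomputable def condProb {V : Type*} [Fintype V] [DecidableEq V] (T : ℕ)
    (p : (Fin T → V) → ℝ) (t : Fin T) (y : Fin T → V) : ℝ :=
  prefProb T ((t : ℕ) + 1) p y / prefProb T (t : ℕ) p y

/-- The globally temperature-adjusted distribution
`p_α(y) = p(y)^(1+α) / ∑_{y'} p(y')^(1+α)` (inverse temperature `1 + α`). -/
noncomputable def globalAdj {V : Type*} [Fintype V] (T : ℕ)
    (p : (Fin T → V) → ℝ) (α : ℝ) (y : Fin T → V) : ℝ :=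
  p y ^ (1 + α) / ∑ y' : Fin T → V, p y' ^ (1 + α)

noncomputable def pwSum {V : Type*} [Fintype V] [DecidableEq V] (T k : ℕ)
    (p : (Fin T → V) → ℝ) (y : (Fin T → V)) (b : ℝ) : ℝ :=
  ∑ w : Fin T → V, if ∀ s : Fin T, (s : ℕ) < k → w s = y s then p w ^ (1 + b) else 0

lemma pwSum_pos {V : Type*} [Fintype V] [DecidableEq V] (T k : ℕ)
    (p : (Fin T → V) → ℝ) (hp0 : ∀ y, 0 < p y) (y : Fin T → V) (b : ℝ) :
    0 < pwSum T k p y b := by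
  apply Finset.sum_pos' (fun w _ => by split
                                       · exact Real.rpow_nonneg (hp0 w).le _
                                       · exact le_rfl)
  exact ⟨y, Finset.mem_univ y, by simp [Real.rpow_pos_of_pos (hp0 y)]⟩

lemma pwSum_hasDerivAt {V : Type*} [Fintype V] [DecidableEq V] (T k : ℕ)
    (p : (Fin T → V) → ℝ) (hp0 : ∀ y, 0 < p y) (y : Fin T → V) (α : ℝ) :
    HasDerivAt (pwSum T k p y)
      (∑ w : Fin T → V, if ∀ s : Fin T, (s : ℕ) < k → w s = y s then
        p w ^ (1 + α) * Real.log (p w) else 0) α := by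
  apply HasDerivAt.fun_sum (fun w _ => ?_)
  by_cases h : ∀ s : Fin T, (s : ℕ) < k → w s = y s
  · simp only [if_pos h]
    have h1 : HasDerivAt (fun b : ℝ => 1 + b) 1 α := (hasDerivAt_id α).const_add 1
    have h2 := (Real.hasStrictDerivAt_const_rpow (hp0 w) (1 + α)).hasDerivAt
    simpa [Function.comp_def] using h2.comp α h1
  · simp only [if_neg h]
    exact hasDerivAt_const α 0

lemma prefProb_eq_pwSum {V : Type*} [Fintype V] [DecidableEq V] (T k : ℕ)
    (p : (Fin T → V) → ℝ) (hp0 : ∀ y, 0 < p y) (y : Fin T → V) :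
    prefProb T k p y = pwSum T k p y 0 := by
  unfold prefProb pwSum
  refine Finset.sum_congr rfl fun w _ => ?_
  split
  · rw [add_zero, Real.rpow_one]
  · rfl

lemma prefProb_globalAdj {V : Type*} [Fintype V] [DecidableEq V] (T k : ℕ)
    (p : (Fin T → V) → ℝ) (b : ℝ) (y : Fin T → V) :
    prefProb T k (globalAdj T p b) y
      = pwSum T k p y b / ∑ y' : Fin T → V, p y' ^ (1 + b) := by
  unfold prefProb pwSum globalAdj
  rw [Finset.sum_div]
  refine Finset.sum_congr rfl fun w _ => ?_
  split <;> simp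

lemma cond_exp_eq {V : Type*} [Fintype V] [DecidableEq V] [Nonempty V] (T k : ℕ)
    (p : (Fin T → V) → ℝ) (hp0 : ∀ y, 0 < p y) (y : Fin T → V) (α : ℝ) :
    ∑ w : Fin T → V,
      (if ∀ s : Fin T, (s : ℕ) < k → w s = y s then
        globalAdj T p α w / prefProb T k (globalAdj T p α) y else 0) *
      Real.log (p w / prefProb T k p y)
    = (∑ w : Fin T → V, if ∀ s : Fin T, (s : ℕ) < k → w s = y s then
        p w ^ (1 + α) * Real.log (p w) else 0) / pwSum T k p y α
      - Real.log (prefProb T k p y) := by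
  have hS : 0 < ∑ y' : Fin T → V, p y' ^ (1 + α) :=
    Finset.sum_pos (fun w _ => Real.rpow_pos_of_pos (hp0 w) _) Finset.univ_nonempty
  have hF : 0 < pwSum T k p y α := pwSum_pos T k p hp0 y α
  have hB : 0 < prefProb T k p y := by
    rw [prefProb_eq_pwSum T k p hp0]; exact pwSum_pos T k p hp0 y 0
  have hstep : ∀ w : Fin T → V,
      (if ∀ s : Fin T, (s : ℕ) < k → w s = y s then
        globalAdj T p α w / prefProb T k (globalAdj T p α) y else 0) *
      Real.log (p w / prefProb T k p y)
      = (if ∀ s : Fin T, (s : ℕ) < k → w s = y s then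
          p w ^ (1 + α) * Real.log (p w) else 0) / pwSum T k p y α
        - ((if ∀ s : Fin T, (s : ℕ) < k → w s = y s then p w ^ (1 + α) else 0)
            / pwSum T k p y α) * Real.log (prefProb T k p y) := by
    intro w
    by_cases h : ∀ s : Fin T, (s : ℕ) < k → w s = y s
    · simp only [if_pos h]
      rw [prefProb_globalAdj, globalAdj, div_div_div_comm, div_self hS.ne', div_one,
        Real.log_div (hp0 w).ne' hB.ne']
      ring
    · simp [if_neg h]
  calc ∑ w : Fin T → V,
      (if ∀ s : Fin T, (s : ℕ) < k → w s = y s then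
        globalAdj T p α w / prefProb T k (globalAdj T p α) y else 0) *
      Real.log (p w / prefProb T k p y)
      = ∑ w : Fin T → V,
        ((if ∀ s : Fin T, (s : ℕ) < k → w s = y s then
          p w ^ (1 + α) * Real.log (p w) else 0) / pwSum T k p y α
        - ((if ∀ s : Fin T, (s : ℕ) < k → w s = y s then p w ^ (1 + α) else 0)
            / pwSum T k p y α) * Real.log (prefProb T k p y)) :=
        Finset.sum_congr rfl fun w _ => hstep w
    _ = (∑ w : Fin T → V, if ∀ s : Fin T, (s : ℕ) < k → w s = y s then
          p w ^ (1 + α) * Real.log (p w) else 0) / pwSum T k p y α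
        - (pwSum T k p y α / pwSum T k p y α) * Real.log (prefProb T k p y) := by
        rw [Finset.sum_sub_distrib, ← Finset.sum_div, ← Finset.sum_mul, ← Finset.sum_div]
        rfl
    _ = _ := by rw [div_self hF.ne', one_mul]

/-- **Derivative of globally temperature-adjusted conditional log probabilities.**
Let `p` be a strictly positive pmf on `V^T` and `p_α` its global temperature adjustment.
Then for every (0-indexed) step `t`, every `y ∈ V^T` and every `α ∈ ℝ`, the map
`α ↦ log p_α(y_t | y_{<t})` is differentiable with derivative
`log p(y_t | y_{<t}) + E_{Ŷ_{>t} ~ p_α(·|y_{≤t})}[log p(Ŷ_{>t} | y_{≤t})]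
  - E_{Ŷ_{≥t} ~ p_α(·|y_{<t})}[log p(Ŷ_{≥t} | y_{<t})]`
(the expectations below range over full sequences `w` agreeing with `y` on the first `t+1`,
resp. `t`, coordinates, weighted by the conditional of `p_α` given that prefix). -/
theorem globalAdj_cond_logProb_hasDerivAt
    {V : Type*} [Fintype V] [DecidableEq V] [Nonempty V]
    (T : ℕ) (p : (Fin T → V) → ℝ)
    (hp0 : ∀ y, 0 < p y) (hp1 : ∑ y : Fin T → V, p y = 1)
    (t : Fin T) (y : Fin T → V) (α : ℝ) :
    HasDerivAt
      (fun b : ℝ => Real.log (condProb T (globalAdj T p b) t y))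
      (Real.log (condProb T p t y) +
        (∑ w : Fin T → V,
          (if ∀ s : Fin T, (s : ℕ) < (t : ℕ) + 1 → w s = y s then
            globalAdj T p α w / prefProb T ((t : ℕ) + 1) (globalAdj T p α) y else 0) *
          Real.log (p w / prefProb T ((t : ℕ) + 1) p y)) -
        ∑ w : Fin T → V,
          (if ∀ s : Fin T, (s : ℕ) < (t : ℕ) → w s = y s then
            globalAdj T p α w / prefProb T (t : ℕ) (globalAdj T p α) y else 0) *
          Real.log (p w / prefProb T (t : ℕ) p y))
      α := by
  have hS : ∀ b : ℝ, 0 < ∑ y' : Fin T → V, p y' ^ (1 + b) := fun b =>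
    Finset.sum_pos (fun w _ => Real.rpow_pos_of_pos (hp0 w) _) Finset.univ_nonempty
  have hF1 : ∀ b : ℝ, 0 < pwSum T ((t : ℕ) + 1) p y b := fun b => pwSum_pos _ _ p hp0 y b
  have hF2 : ∀ b : ℝ, 0 < pwSum T (t : ℕ) p y b := fun b => pwSum_pos _ _ p hp0 y b
  have hB1 : 0 < prefProb T ((t : ℕ) + 1) p y := by
    rw [prefProb_eq_pwSum _ _ p hp0]; exact hF1 0
  have hB2 : 0 < prefProb T (t : ℕ) p y := by
    rw [prefProb_eq_pwSum _ _ p hp0]; exact hF2 0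
  have hfun : (fun b : ℝ => Real.log (condProb T (globalAdj T p b) t y))
      = fun b : ℝ => Real.log (pwSum T ((t : ℕ) + 1) p y b)
          - Real.log (pwSum T (t : ℕ) p y b) := by
    funext b
    rw [condProb, prefProb_globalAdj, prefProb_globalAdj, div_div_div_comm,
      div_self (hS b).ne', div_one, Real.log_div (hF1 b).ne' (hF2 b).ne']
  have hd : HasDerivAt
      (fun b : ℝ => Real.log (pwSum T ((t : ℕ) + 1) p y b)
        - Real.log (pwSum T (t : ℕ) p y b))
      ((∑ w : Fin T → V, if ∀ s : Fin T, (s : ℕ) < (t : ℕ) + 1 → w s = y s then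
          p w ^ (1 + α) * Real.log (p w) else 0) / pwSum T ((t : ℕ) + 1) p y α
        - (∑ w : Fin T → V, if ∀ s : Fin T, (s : ℕ) < (t : ℕ) → w s = y s then
          p w ^ (1 + α) * Real.log (p w) else 0) / pwSum T (t : ℕ) p y α) α :=
    ((pwSum_hasDerivAt T _ p hp0 y α).log (hF1 α).ne').sub
      ((pwSum_hasDerivAt T _ p hp0 y α).log (hF2 α).ne')
  rw [hfun]
  convert hd using 1
  rw [cond_exp_eq T _ p hp0 y α, cond_exp_eq T _ p hp0 y α, condProb,
    Real.log_div hB1.ne' hB2.ne']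
  ring
end

section
/- Future-entropy adjustment as first-order global temperature scaling: let p be a strictly positive probability mass function on V^T and p_α(Y) = p(Y)^{1+α} / Σ_{Y'} p(Y')^{1+α}. Then for every t ∈ {1,…,T} and every Y ∈ V^T, the derivative at α = 0 of α ↦ log p_α(Y_t | Y_{<t}) equals log p(Y_t | Y_{<t}) − H_p(Y_{>t} | Y_{≤t}) + H_p(Y_{≥t} | Y_{<t}). Consequently the first-order Taylor expansion of log p_α(Y_t | Y_{<t}) at α = 0 is (1+α) log p(Y_t | Y_{<t}) − α H_p(Y_{>t} | Y_{≤t}) + c(α, Y_{<t}), where c(α, Y_{<t}) = α H_p(Y_{≥t} | Y_{<t}) does not depend on Y_t. -/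
open Finset

/-- Future entropy `H_p(Y_{>t} | Y_{≤t})` of the length-`t` prefix of `y`. -/
noncomputable def futEnt {V : Type*} [Fintype V] [DecidableEq V] (T t : ℕ)
    (p : (Fin T → V) → ℝ) (y : Fin T → V) : ℝ :=
  ∑ w : Fin T → V,
    if ∀ s : Fin T, (s : ℕ) < t → w s = y s then
      (p w / prefProb T t p y) * (-Real.log (p w / prefProb T t p y))
    else 0

/-- **Future-entropy adjustment as first-order global temperature scaling.**
Let `p` be a strictly positive pmf on `V^T` and `p_α` its global temperature adjustment.
For every (0-indexed) step `t` and every `y ∈ V^T`, the derivative at `α = 0` of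
`α ↦ log p_α(y_t | y_{<t})` equals
`log p(y_t | y_{<t}) - H_p(Y_{>t} | y_{≤t}) + H_p(Y_{≥t} | y_{<t})`.
Consequently the first-order Taylor expansion of `log p_α(y_t | y_{<t})` at `α = 0` is
`(1+α) log p(y_t | y_{<t}) - α H_p(Y_{>t} | y_{≤t}) + α H_p(Y_{≥t} | y_{<t})`, whose last
term does not depend on `y t`. -/
theorem future_entropy_first_order_temperature
    {V : Type*} [Fintype V] [DecidableEq V] [Nonempty V]
    (T : ℕ) (p : (Fin T → V) → ℝ)
    (hp0 : ∀ y, 0 < p y) (hp1 : ∑ y : Fin T → V, p y = 1)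
    (t : Fin T) (y : Fin T → V) :
    HasDerivAt
      (fun b : ℝ => Real.log (condProb T (globalAdj T p b) t y))
      (Real.log (condProb T p t y) - futEnt T ((t : ℕ) + 1) p y + futEnt T (t : ℕ) p y)
      0 ∧
    ∀ α : ℝ,
      Real.log (condProb T p t y) +
        α * (Real.log (condProb T p t y) - futEnt T ((t : ℕ) + 1) p y +
          futEnt T (t : ℕ) p y) =
      (1 + α) * Real.log (condProb T p t y) - α * futEnt T ((t : ℕ) + 1) p y +
        α * futEnt T (t : ℕ) p y := by
  classical
  refine ⟨?_, fun α => by ring⟩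
  -- notation
  set S : ℕ → ℝ → ℝ := fun u b => ∑ w : Fin T → V,
      if ∀ s : Fin T, (s : ℕ) < u → w s = y s then p w ^ (1 + b) else 0 with hS
  set A : ℕ → ℝ := fun u => ∑ w : Fin T → V,
      if ∀ s : Fin T, (s : ℕ) < u → w s = y s then p w * Real.log (p w) else 0 with hA
  have hSpos : ∀ u b, 0 < S u b := by
    intro u b
    refine Finset.sum_pos' (fun w _ => ?_) ⟨y, Finset.mem_univ y, ?_⟩
    · split
      · exact (Real.rpow_pos_of_pos (hp0 w) _).le
      · exact le_rfl
    · simp [Real.rpow_pos_of_pos (hp0 y)]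
  have hS0 : ∀ u, S u 0 = prefProb T u p y := by
    intro u
    simp only [hS, prefProb]
    refine Finset.sum_congr rfl fun w _ => ?_
    split <;> simp
  have hPpos : ∀ u, 0 < prefProb T u p y := fun u => hS0 u ▸ hSpos u 0
  have hZpos : ∀ b : ℝ, 0 < ∑ y' : Fin T → V, p y' ^ (1 + b) := by
    intro b
    exact Finset.sum_pos (fun w _ => Real.rpow_pos_of_pos (hp0 w) _) Finset.univ_nonempty
  have hpref : ∀ (u : ℕ) (b : ℝ),
      prefProb T u (globalAdj T p b) y = S u b / (∑ y' : Fin T → V, p y' ^ (1 + b)) := by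
    intro u b
    simp only [prefProb, globalAdj, hS]
    rw [Finset.sum_div]
    refine Finset.sum_congr rfl fun w _ => ?_
    split
    · rfl
    · simp
  have hkey : ∀ b : ℝ, Real.log (condProb T (globalAdj T p b) t y)
      = Real.log (S ((t : ℕ) + 1) b) - Real.log (S (t : ℕ) b) := by
    intro b
    have hZ := (hZpos b).ne'
    have h1 := (hSpos ((t : ℕ) + 1) b).ne'
    have h0 := (hSpos (t : ℕ) b).ne'
    rw [condProb, hpref, hpref, div_div_div_comm, div_self hZ, div_one,
      Real.log_div h1 h0]
  have hderivS : ∀ u : ℕ, HasDerivAt (fun b => S u b) (A u) 0 := by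
    intro u
    have h : HasDerivAt (fun b => S u b)
        (∑ w : Fin T → V, if ∀ s : Fin T, (s : ℕ) < u → w s = y s then
          p w ^ (1 + (0:ℝ)) * Real.log (p w) else 0) 0 := by
      refine HasDerivAt.fun_sum fun w _ => ?_
      by_cases hw : ∀ s : Fin T, (s : ℕ) < u → w s = y s
      · simp only [if_pos hw]
        have h1 : HasDerivAt (fun b : ℝ => 1 + b) 1 0 := by
          simpa using (hasDerivAt_id (0:ℝ)).const_add 1
        have h2 := (Real.hasStrictDerivAt_const_rpow (hp0 w) (1 + (0:ℝ))).hasDerivAt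
        simpa [Function.comp_def] using h2.comp 0 h1
      · simp only [if_neg hw]
        exact hasDerivAt_const _ _
    have hAeq : A u = ∑ w : Fin T → V, if ∀ s : Fin T, (s : ℕ) < u → w s = y s then
        p w ^ (1 + (0:ℝ)) * Real.log (p w) else 0 := by
      refine Finset.sum_congr rfl fun w _ => ?_
      split <;> simp
    rw [hAeq]
    exact h
  have hlog : ∀ u : ℕ, HasDerivAt (fun b => Real.log (S u b))
      (A u / prefProb T u p y) 0 := by
    intro u
    have := (hderivS u).log (hSpos u 0).ne'
    rwa [hS0 u] at this
  have hfut : ∀ u : ℕ, futEnt T u p y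
      = Real.log (prefProb T u p y) - A u / prefProb T u p y := by
    intro u
    have hP := (hPpos u).ne'
    have h1 : futEnt T u p y = (∑ w : Fin T → V,
        ((if ∀ s : Fin T, (s : ℕ) < u → w s = y s then
            p w * Real.log (prefProb T u p y) else 0)
         - (if ∀ s : Fin T, (s : ℕ) < u → w s = y s then p w * Real.log (p w) else 0)))
        / prefProb T u p y := by
      rw [futEnt, eq_div_iff hP, Finset.sum_mul]
      refine Finset.sum_congr rfl fun w _ => ?_
      split
      · rw [Real.log_div (hp0 w).ne' hP]
        field_simp
        ring
      · simp
    have h2 : (∑ w : Fin T → V, if ∀ s : Fin T, (s : ℕ) < u → w s = y s then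
        p w * Real.log (prefProb T u p y) else 0)
        = prefProb T u p y * Real.log (prefProb T u p y) := by
      nth_rewrite 2 [prefProb]
      rw [Finset.sum_mul]
      refine Finset.sum_congr rfl fun w _ => ?_
      split <;> simp
    have h3 : (∑ w : Fin T → V, if ∀ s : Fin T, (s : ℕ) < u → w s = y s then
        p w * Real.log (p w) else 0) = A u := rfl
    rw [h1, Finset.sum_sub_distrib, h2, h3]
    field_simp
  have hmain : HasDerivAt
      (fun b : ℝ => Real.log (S ((t : ℕ) + 1) b) - Real.log (S (t : ℕ) b))
      (A ((t : ℕ) + 1) / prefProb T ((t : ℕ) + 1) p y - A (t : ℕ) / prefProb T (t : ℕ) p y)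
      0 := (hlog _).sub (hlog _)
  have heq : (fun b : ℝ => Real.log (condProb T (globalAdj T p b) t y))
      = fun b : ℝ => Real.log (S ((t : ℕ) + 1) b) - Real.log (S (t : ℕ) b) :=
    funext hkey
  rw [heq]
  convert hmain using 1
  rw [hfut, hfut, condProb, Real.log_div (hPpos _).ne' (hPpos _).ne']
  ring
end
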